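/- Assume β > 0 and γ_i ≤ μ_i for every i = 1,…,m. Then for every x ∈ K₊ and every u ∈ Δ, ⟨b(x,u), ∇Ψ(x)⟩ ≤ -(β/m) ∑_{i=1}^m ψ'(x_i) ≤ -β/m. -/

import Mathlib

/-!
Since `∂ᵢΨ(x) = ψ'(xᵢ)/μᵢ`, the factors `μᵢ` cancel and, with `S = ∑ xᵢ > 0`,
`⟨b(x,u), ∇Ψ(x)⟩ = -(β/m) ∑ ψ'(xᵢ) - ∑ ψ'(xᵢ) xᵢ + S ∑ uᵢ ψ'(xᵢ) (1 - γᵢ/μᵢ)`.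
As `0 ≤ ψ' ≤ 1` and `γᵢ ≥ 0`, the last sum is at most `∑ uᵢ = 1`; as `ψ' = 1` on `(0, ∞)`,
`t ≤ ψ'(t) t`, so `∑ ψ'(xᵢ) xᵢ ≥ S`. For the second inequality, some `xᵢ` is positive, so
`∑ ψ'(xᵢ) ≥ 1`.
-/

open scoped BigOperators

noncomputable section

/-- The piecewise function `ψ` from Definition 1 of the paper. -/
def psi (t : ℝ) : ℝ :=
  if t ≤ -1 then -(1/2)
  else if t ≤ 0 then (t+1)^3 - (1/2)*(t+1)^4 - 1/2
  else t

/-- `Ψ(x) = ∑ i, ψ(x_i)/μ_i`. -/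
def Psi (m : ℕ) (μ : Fin m → ℝ) (x : Fin m → ℝ) : ℝ := ∑ i, psi (x i) / μ i

/-- The drift `b(x,u) = -(β/m) M e - M (x - ⟨e,x⟩⁺ u) - ⟨e,x⟩⁺ Γ u`, written
componentwise, where `M = diag(μ)` and `Γ = diag(γ)`. -/
def drift (m : ℕ) (μ γ : Fin m → ℝ) (β : ℝ) (x u : Fin m → ℝ) : Fin m → ℝ :=
  fun i => -(β / (m : ℝ)) * μ i - μ i * (x i - max (∑ j, x j) 0 * u i)
    - max (∑ j, x j) 0 * (γ i * u i)

open Finset Set Filter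

theorem hasDerivAt_ite_le {g h g' h' : ℝ → ℝ} {a : ℝ}
    (hg : ∀ t, HasDerivAt g (g' t) t) (hh : ∀ t, HasDerivAt h (h' t) t)
    (hval : g a = h a) (hder : g' a = h' a) (t : ℝ) :
    HasDerivAt (fun s => if s ≤ a then g s else h s) (if t ≤ a then g' t else h' t) t := by
  rcases lt_trichotomy t a with hta | rfl | hat
  · rw [if_pos hta.le]
    exact (hg t).congr_of_eventuallyEq <|
      eventually_of_mem (Iio_mem_nhds hta) fun s hs => if_pos (le_of_lt hs)
  · rw [if_pos le_rfl]
    have hle : HasDerivWithinAt (fun s => if s ≤ t then g s else h s) (g' t) (Iic t) t :=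
      (hg t).hasDerivWithinAt.congr (fun s hs => if_pos hs) (if_pos le_rfl)
    have hge : HasDerivWithinAt (fun s => if s ≤ t then g s else h s) (g' t) (Ici t) t := by
      refine (hder ▸ hh t).hasDerivWithinAt.congr (fun s hs => ?_) (by simp [hval])
      rcases (mem_Ici.1 hs).eq_or_lt with rfl | hlt
      · simp [hval]
      · exact if_neg (not_le.2 hlt)
    simpa [Iic_union_Ici] using hle.union hge
  · rw [if_neg (not_le.2 hat)]
    exact (hh t).congr_of_eventuallyEq <|
      eventually_of_mem (Ioi_mem_nhds hat) fun s hs => if_neg (not_le.2 hs)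

def psiDeriv (t : ℝ) : ℝ :=
  if t ≤ -1 then 0
  else if t ≤ 0 then 3 * (t + 1) ^ 2 - 2 * (t + 1) ^ 3
  else 1

theorem hasDerivAt_psi (t : ℝ) : HasDerivAt psi (psiDeriv t) t := by
  have hmid (s : ℝ) : HasDerivAt (fun s : ℝ => (s + 1) ^ 3 - (1 / 2) * (s + 1) ^ 4 - 1 / 2)
      (3 * (s + 1) ^ 2 - 2 * (s + 1) ^ 3) s := by
    have hlin : HasDerivAt (fun s : ℝ => s + 1) 1 s := (hasDerivAt_id s).add_const 1
    refine (((hlin.pow 3).sub ((hlin.pow 4).const_mul (1 / 2))).sub_const (1 / 2)).congr_deriv ?_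
    push_cast
    ring
  have hupper (s : ℝ) := hasDerivAt_ite_le (a := 0) (h := id) (h' := fun _ => 1) hmid
    hasDerivAt_id (by norm_num) (by norm_num) s
  exact hasDerivAt_ite_le (a := -1) (fun s => hasDerivAt_const s (-(1 / 2) : ℝ)) hupper
    (by norm_num) (by norm_num) t

theorem psiDeriv_nonneg (t : ℝ) : 0 ≤ psiDeriv t := by
  unfold psiDeriv
  split_ifs with h₁ h₂
  · rfl
  · nlinarith [sq_nonneg (t + 1)]
  · exact zero_le_one

theorem psiDeriv_le_one (t : ℝ) : psiDeriv t ≤ 1 := by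
  unfold psiDeriv
  split_ifs with h₁ h₂
  · exact zero_le_one
  · nlinarith [mul_nonneg (sq_nonneg t) (by linarith : (0 : ℝ) ≤ 2 * t + 3)]
  · rfl

theorem psiDeriv_of_pos {t : ℝ} (ht : 0 < t) : psiDeriv t = 1 := by
  simp [psiDeriv, not_le.2 ht, not_le.2 (ht.trans' neg_one_lt_zero)]

theorem le_psiDeriv_mul_self (t : ℝ) : t ≤ psiDeriv t * t := by
  rcases le_or_gt t 0 with ht | ht
  · nlinarith [psiDeriv_le_one t]
  · simp [psiDeriv_of_pos ht]

theorem one_le_sum_psiDeriv {ι : Type*} {s : Finset ι} {x : ι → ℝ} (hx : 0 < ∑ i ∈ s, x i) :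
    1 ≤ ∑ i ∈ s, psiDeriv (x i) := by
  obtain ⟨i, hi, hxi⟩ := exists_lt_of_sum_lt (f := fun _ => (0 : ℝ)) (by simpa using hx)
  calc 1 = psiDeriv (x i) := (psiDeriv_of_pos hxi).symm
    _ ≤ ∑ i ∈ s, psiDeriv (x i) := single_le_sum (fun j _ => psiDeriv_nonneg (x j)) hi

theorem fderiv_Psi_apply (m : ℕ) (μ x v : Fin m → ℝ) :
    fderiv ℝ (Psi m μ) x v = ∑ i, psiDeriv (x i) / μ i * v i := by
  have hterm (i : Fin m) : HasFDerivAt (fun y : Fin m → ℝ => psi (y i) / μ i)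
      ((psiDeriv (x i) / μ i) • ContinuousLinearMap.proj (R := ℝ) i) x := by
    have hproj := hasFDerivAt_apply (𝕜 := ℝ) i x
    exact ((hasDerivAt_psi (x i)).div_const (μ i)).comp_hasFDerivAt x hproj
  have hsum : HasFDerivAt (Psi m μ)
      (∑ i, (psiDeriv (x i) / μ i) • ContinuousLinearMap.proj (R := ℝ) i) x :=
    HasFDerivAt.fun_sum fun i _ => hterm i
  simp [hsum.fderiv]

theorem psiDeriv_div_mul_drift_le {m : ℕ} {μ γ x u : Fin m → ℝ} (β : ℝ) {i : Fin m}
    (hμ : 0 < μ i) (hγ : 0 ≤ γ i) (hu : 0 ≤ u i) (hx : 0 ≤ ∑ j, x j) :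
    psiDeriv (x i) / μ i * drift m μ γ β x u i ≤
      -(β / m) * psiDeriv (x i) - psiDeriv (x i) * x i + (∑ j, x j) * u i := by
  set d := psiDeriv (x i)
  set S := ∑ j, x j
  have hdrift : d / μ i * drift m μ γ β x u i =
      -(β / m) * d - d * x i + S * u i * (d - d * γ i / μ i) := by
    simp only [drift, max_eq_left hx, S]
    field_simp
    ring
  have hfactor : d - d * γ i / μ i ≤ 1 := by
    have : 0 ≤ d * γ i / μ i := by positivity [psiDeriv_nonneg (x i)]
    linarith [psiDeriv_le_one (x i)]
  have := mul_le_of_le_one_right (by positivity : 0 ≤ S * u i) hfactor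
  linarith

theorem stmt_3_general (m : ℕ) (μ γ : Fin m → ℝ)
    (hμ : ∀ i, 0 < μ i) (hγ : ∀ i, 0 ≤ γ i)
    (β : ℝ) (hβ : 0 < β)
    (x : Fin m → ℝ) (hx : 0 < ∑ i, x i)
    (u : Fin m → ℝ) (hu0 : ∀ i, 0 ≤ u i) (hu1 : ∑ i, u i = 1) :
    fderiv ℝ (Psi m μ) x (drift m μ γ β x u) ≤ -(β / (m : ℝ)) * ∑ i, deriv psi (x i) ∧
    -(β / (m : ℝ)) * ∑ i, deriv psi (x i) ≤ -(β / (m : ℝ)) := by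
  have hderiv (t : ℝ) : deriv psi t = psiDeriv t := (hasDerivAt_psi t).deriv
  simp only [hderiv]
  constructor
  · have hmono : ∑ i, x i ≤ ∑ i, psiDeriv (x i) * x i :=
      sum_le_sum fun i _ => le_psiDeriv_mul_self (x i)
    calc fderiv ℝ (Psi m μ) x (drift m μ γ β x u)
        = ∑ i, psiDeriv (x i) / μ i * drift m μ γ β x u i := fderiv_Psi_apply m μ x _
      _ ≤ ∑ i, (-(β / m) * psiDeriv (x i) - psiDeriv (x i) * x i + (∑ j, x j) * u i) :=
        sum_le_sum fun i _ => psiDeriv_div_mul_drift_le β (hμ i) (hγ i) (hu0 i) hx.le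
      _ = -(β / m) * ∑ i, psiDeriv (x i) - ∑ i, psiDeriv (x i) * x i + ∑ i, x i := by
        rw [sum_add_distrib, sum_sub_distrib, ← mul_sum, ← mul_sum, hu1, mul_one]
      _ ≤ -(β / m) * ∑ i, psiDeriv (x i) := by linarith
  · simpa using mul_le_mul_of_nonpos_left (one_le_sum_psiDeriv hx)
      (neg_nonpos.2 (by positivity : 0 ≤ β / m))

/-- If `β > 0` and `γ_i ≤ μ_i` for all `i`, then for `x ∈ K₊` and `u ∈ Δ`,
`⟨b(x,u), ∇Ψ(x)⟩ ≤ -(β/m) ∑ i, ψ'(x_i) ≤ -β/m`. -/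
theorem stmt_3 (m : ℕ) (hm : 1 ≤ m) (μ γ : Fin m → ℝ)
    (hμ : ∀ i, 0 < μ i) (hγ : ∀ i, 0 ≤ γ i) (hγμ : ∀ i, γ i ≤ μ i)
    (β : ℝ) (hβ : 0 < β)
    (x : Fin m → ℝ) (hx : 0 < ∑ i, x i)
    (u : Fin m → ℝ) (hu0 : ∀ i, 0 ≤ u i) (hu1 : ∑ i, u i = 1) :
    fderiv ℝ (Psi m μ) x (drift m μ γ β x u) ≤ -(β / (m : ℝ)) * ∑ i, deriv psi (x i) ∧
    -(β / (m : ℝ)) * ∑ i, deriv psi (x i) ≤ -(β / (m : ℝ)) :=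
  stmt_3_general m μ γ hμ hγ β hβ x hx u hu0 hu1
end
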